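/- Let N_j, N_k, N'_j, N'_k be four independent standard normal random variables, σ_j, σ_k > 0 and c ∈ ℝ. Then E[ P(σ_j(N_j + N'_j) ≤ σ_k(N_k + N'_k) + c | N_j, N_k) ] = Φ(c / √(2(σ_j² + σ_k²))). Consequently this expectation differs from the true limiting pairwise probability Φ(c / √(σ_j² + σ_k²)) whenever c ≠ 0. -/

import Mathlib

open MeasureTheory ProbabilityTheory
open scoped NNReal

/-!
The difference `X = σj (N_j + N'_j) - σk (N_k + N'_k)` is a sum of four independent centred
Gaussians, so `X ~ 𝒩(0, 2(σj² + σk²))`, and the event in question is `{X ≤ c}`. Integrating its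
conditional probability gives back its probability `Φ(c / √(2(σj² + σk²)))`. As `Φ` is strictly
increasing, this differs from `Φ(c / √(σj² + σk²))` as soon as `c ≠ 0`.
-/

namespace ProbabilityTheory

lemma cdf_strictMono_of_absolutelyContinuous (μ : Measure ℝ) [IsProbabilityMeasure μ]
    (hμ : volume ≪ μ) : StrictMono (cdf μ) := by
  intro x y hxy
  have hIoc : μ (Set.Ioc x y) ≠ 0 := fun h ↦ by
    have := hμ h
    rw [Real.volume_Ioc, ENNReal.ofReal_eq_zero] at this
    linarith
  rw [← measure_cdf μ, StieltjesFunction.measure_Ioc, ENNReal.ofReal_ne_zero_iff] at hIoc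
  exact sub_pos.mp hIoc

lemma cdf_gaussianReal (m : ℝ) {v : ℝ≥0} (hv : v ≠ 0) (x : ℝ) :
    cdf (gaussianReal m v) x = cdf (gaussianReal 0 1) ((x - m) / Real.sqrt v) := by
  have hsqrt : 0 < Real.sqrt v := Real.sqrt_pos.mpr (by positivity)
  have hstd : (gaussianReal 0 1).map (fun y ↦ Real.sqrt v * y + m) = gaussianReal m v := by
    change (gaussianReal 0 1).map ((· + m) ∘ (Real.sqrt v * ·)) = _
    rw [← Measure.map_map (measurable_add_const m) (measurable_const_mul _),
      gaussianReal_map_const_mul, gaussianReal_map_add_const]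
    congr 1
    · ring
    · ext; simp
  have hpre : (fun y ↦ Real.sqrt v * y + m) ⁻¹' Set.Iic x = Set.Iic ((x - m) / Real.sqrt v) := by
    ext y
    simp only [Set.mem_preimage, Set.mem_Iic, le_div_iff₀ hsqrt]
    constructor <;> intro h <;> linarith
  rw [cdf_eq_real, cdf_eq_real, ← hstd, map_measureReal_apply (by fun_prop) measurableSet_Iic, hpre]

lemma map_finsetSum_eq_gaussianReal {Ω ι : Type*} [MeasurableSpace Ω] (μ : Measure Ω)
    [IsProbabilityMeasure μ] {X : ι → Ω → ℝ} (hmeas : ∀ i, Measurable (X i))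
    (hindep : iIndepFun X μ) {m : ι → ℝ} {v : ι → ℝ≥0}
    (hlaw : ∀ i, μ.map (X i) = gaussianReal (m i) (v i)) (s : Finset ι) :
    μ.map (∑ i ∈ s, X i) = gaussianReal (∑ i ∈ s, m i) (∑ i ∈ s, v i) := by
  classical
  induction s using Finset.induction_on with
  | empty =>
    rw [Finset.sum_empty, Finset.sum_empty, Finset.sum_empty, gaussianReal_zero_var]
    exact (Measure.map_const μ 0).trans (by simp)
  | insert i s hi ih =>
    rw [Finset.sum_insert hi, Finset.sum_insert hi, Finset.sum_insert hi, add_comm (X i),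
      add_comm (m i), add_comm (v i)]
    exact gaussianReal_add_gaussianReal_of_indepFun
      (hindep.indepFun_finsetSum_of_notMem hmeas hi) ih (hlaw i)

lemma map_sum_mul_eq_gaussianReal {Ω ι : Type*} [MeasurableSpace Ω] (μ : Measure Ω)
    [IsProbabilityMeasure μ] [Fintype ι] {X : ι → Ω → ℝ} (hmeas : ∀ i, Measurable (X i))
    (hindep : iIndepFun X μ) (hlaw : ∀ i, μ.map (X i) = gaussianReal 0 1) (a : ι → ℝ) :
    μ.map (fun ω ↦ ∑ i, a i * X i ω) = gaussianReal 0 (∑ i, a i ^ 2).toNNReal := by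
  rw [← Finset.sum_fn, map_finsetSum_eq_gaussianReal μ (fun i ↦ (hmeas i).const_mul (a i))
    (hindep.comp (fun i x ↦ a i * x) fun i ↦ measurable_const_mul (a i))
    (fun i ↦ (gaussianReal_const_mul ⟨(hmeas i).aemeasurable, hlaw i⟩ (a i)).map_eq)]
  congr 1
  · simp
  · ext
    simp [Finset.sum_nonneg fun i _ ↦ sq_nonneg (a i)]

end ProbabilityTheory

theorem bootstrap_doubled_variance_inconsistency_general
    {Ω : Type*} [MeasurableSpace Ω] (μ : Measure Ω) [IsProbabilityMeasure μ]
    (Nj Nk Nj' Nk' : Ω → ℝ)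
    (hNj : Measurable Nj) (hNk : Measurable Nk)
    (hNj' : Measurable Nj') (hNk' : Measurable Nk')
    (hindep : iIndepFun ![Nj, Nk, Nj', Nk'] μ)
    (hlaw : ∀ i : Fin 4, μ.map (![Nj, Nk, Nj', Nk'] i) = gaussianReal 0 1)
    (σj σk : ℝ) (hσj : 0 < σj) (c : ℝ) :
    (∫ ω, (μ[Set.indicator {ω' | σj * (Nj ω' + Nj' ω') ≤ σk * (Nk ω' + Nk' ω') + c}
          (fun _ => (1 : ℝ)) |
        MeasurableSpace.comap (fun ω' => (Nj ω', Nk ω')) inferInstance]) ω ∂μ) =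
      cdf (gaussianReal 0 1) (c / Real.sqrt (2 * (σj ^ 2 + σk ^ 2))) ∧
    (c ≠ 0 →
      cdf (gaussianReal 0 1) (c / Real.sqrt (2 * (σj ^ 2 + σk ^ 2))) ≠
        cdf (gaussianReal 0 1) (c / Real.sqrt (σj ^ 2 + σk ^ 2))) := by
  set N := ![Nj, Nk, Nj', Nk']
  set a : Fin 4 → ℝ := ![σj, -σk, σj, -σk]
  set X : Ω → ℝ := fun ω ↦ σj * (Nj ω + Nj' ω) - σk * (Nk ω + Nk' ω)
  have hN : ∀ i, Measurable (N i) := fun i ↦ by fin_cases i <;> assumption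
  have hV : 0 < σj ^ 2 + σk ^ 2 := by positivity
  have hXlaw : μ.map X = gaussianReal 0 (2 * (σj ^ 2 + σk ^ 2)).toNNReal := by
    have hX : X = fun ω ↦ ∑ i, a i * N i ω := by
      funext ω
      simp only [X, a, N, Fin.sum_univ_four, Matrix.cons_val]
      ring
    have ha : ∑ i, a i ^ 2 = 2 * (σj ^ 2 + σk ^ 2) := by
      simp only [a, Fin.sum_univ_four, Matrix.cons_val]
      ring
    rw [hX, map_sum_mul_eq_gaussianReal μ hN hindep hlaw, ha]
  have hevent : {ω | σj * (Nj ω + Nj' ω) ≤ σk * (Nk ω + Nk' ω) + c} = X ⁻¹' Set.Iic c := by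
    ext
    exact (sub_le_iff_le_add' (c := c)).symm
  have hXmeas : Measurable X := by fun_prop
  refine ⟨?_, fun hc ↦ ?_⟩
  · rw [integral_condExp_indicator (hNj.prodMk hNk) (hevent ▸ hXmeas measurableSet_Iic), hevent,
      ← map_measureReal_apply hXmeas measurableSet_Iic, hXlaw, ← cdf_eq_real, cdf_gaussianReal,
      sub_zero, Real.coe_toNNReal _ (by positivity)]
    positivity
  · have hsqrt : Real.sqrt (σj ^ 2 + σk ^ 2) < Real.sqrt (2 * (σj ^ 2 + σk ^ 2)) :=
      Real.sqrt_lt_sqrt hV.le (by linarith)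
    refine (cdf_strictMono_of_absolutelyContinuous _
      (gaussianReal_absolutelyContinuous' 0 one_ne_zero)).injective.ne fun h ↦ hsqrt.ne ?_
    field_simp at h
    exact h

theorem bootstrap_doubled_variance_inconsistency
    {Ω : Type*} [MeasurableSpace Ω] (μ : Measure Ω) [IsProbabilityMeasure μ]
    (Nj Nk Nj' Nk' : Ω → ℝ)
    (hNj : Measurable Nj) (hNk : Measurable Nk)
    (hNj' : Measurable Nj') (hNk' : Measurable Nk')
    (hindep : iIndepFun ![Nj, Nk, Nj', Nk'] μ)
    (hlaw : ∀ i : Fin 4, μ.map (![Nj, Nk, Nj', Nk'] i) = gaussianReal 0 1)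
    (σj σk : ℝ) (hσj : 0 < σj) (hσk : 0 < σk) (c : ℝ) :
    (∫ ω, (μ[Set.indicator {ω' | σj * (Nj ω' + Nj' ω') ≤ σk * (Nk ω' + Nk' ω') + c}
          (fun _ => (1 : ℝ)) |
        MeasurableSpace.comap (fun ω' => (Nj ω', Nk ω')) inferInstance]) ω ∂μ) =
      cdf (gaussianReal 0 1) (c / Real.sqrt (2 * (σj ^ 2 + σk ^ 2))) ∧
    (c ≠ 0 →
      cdf (gaussianReal 0 1) (c / Real.sqrt (2 * (σj ^ 2 + σk ^ 2))) ≠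
        cdf (gaussianReal 0 1) (c / Real.sqrt (σj ^ 2 + σk ^ 2))) :=
  bootstrap_doubled_variance_inconsistency_general μ Nj Nk Nj' Nk' hNj hNk hNj' hNk' hindep hlaw σj
    σk hσj c
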